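/- Let ψ₁, ψ₂ ∈ ℝ⁴ be linearly independent real unit vectors and p ∈ [0,1]. Then the concurrence is convex on such mixtures: C(p ψ₁ψ₁ᵀ + (1−p) ψ₂ψ₂ᵀ) ≤ p C(ψ₁ψ₁ᵀ) + (1−p) C(ψ₂ψ₂ᵀ). -/

import Mathlib

/-! For real states the spin flip is real: `ρ̃ = J ρ J`. Write the mixture as `ρ = Φᵀ D Φ`, where `Φ`
has rows `ψ₁, ψ₂` and `D = diag(p, 1 - p)`, and put `G = Φ J Φᵀ`. Then `ρ ρ̃ = Φᵀ (D G D Φ J)`, so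
the spectrum of `ρ ρ̃` is that of `(D G)²` padded with two zeros. The eigenvalues `x, y` of `D G`
are real because `G` is symmetric and `p (1 - p) ≥ 0`, hence
`C(ρ) = ||x| - |y|| ≤ |x + y| = |tr (D G)| = |p G₁₁ + (1 - p) G₂₂| ≤ p |G₁₁| + (1 - p) |G₂₂|`,
and the case `p = 1` of the same computation gives `C(ψψᵀ) = |ψᵀ J ψ|`. -/

open Matrix Polynomial

noncomputable section

/-- `J = σ_y ⊗ σ_y` as a complex 4×4 matrix (standard product basis). -/
def Jc : Matrix (Fin 4) (Fin 4) ℂ :=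
  !![0, 0, 0, -1; 0, 0, 1, 0; 0, 1, 0, 0; -1, 0, 0, 0]

/-- `J = σ_y ⊗ σ_y` as a real 4×4 matrix (standard product basis). -/
def Jr : Matrix (Fin 4) (Fin 4) ℝ :=
  !![0, 0, 0, -1; 0, 0, 1, 0; 0, 1, 0, 0; -1, 0, 0, 0]

/-- The spin-flipped matrix `ρ̃ = J ρ̄ J`. -/
def spinFlip (ρ : Matrix (Fin 4) (Fin 4) ℂ) : Matrix (Fin 4) (Fin 4) ℂ :=
  Jc * ρ.map (starRingEnd ℂ) * Jc

/-- The concurrence of a two-qubit density matrix `ρ`: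
`max (0, √μ₁ − √μ₂ − √μ₃ − √μ₄)` where `μ₁ ≥ μ₂ ≥ μ₃ ≥ μ₄` are the (real,
nonnegative) eigenvalues of `ρ ρ̃` listed with multiplicity. -/
def concurrence (ρ : Matrix (Fin 4) (Fin 4) ℂ) : ℝ :=
  let l : List ℝ :=
    (((ρ * spinFlip ρ).charpoly.roots.map Complex.re).sort (· ≤ ·))
  max 0 (Real.sqrt (l.getD 3 0) - Real.sqrt (l.getD 2 0) -
    Real.sqrt (l.getD 1 0) - Real.sqrt (l.getD 0 0))

/-- The (complex) density matrix of the pure state given by a real 4-vector `ψ`,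
namely `ψ ψᵀ`. -/
def pureState (ψ : Fin 4 → ℝ) : Matrix (Fin 4) (Fin 4) ℂ :=
  (Matrix.vecMulVec ψ ψ).map Complex.ofReal

end

namespace Matrix

variable {R : Type*} [CommRing R]

theorem trace_sq_fin_two (M : Matrix (Fin 2) (Fin 2) R) :
    (M ^ 2).trace = M.trace ^ 2 - 2 * M.det := by
  simp only [trace_fin_two, det_fin_two, sq, mul_apply, Fin.sum_univ_two]
  ring

theorem charpoly_fin_two_eq_of_trace_of_det [Nontrivial R] {M : Matrix (Fin 2) (Fin 2) R}
    {x y : R} (htr : M.trace = x + y) (hdet : M.det = x * y) :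
    M.charpoly = (X - C x) * (X - C y) := by
  rw [charpoly_fin_two, htr, hdet, C_add, C_mul]
  ring

theorem charpoly_sq_fin_two [Nontrivial R] {M : Matrix (Fin 2) (Fin 2) R}
    {x y : R} (htr : M.trace = x + y) (hdet : M.det = x * y) :
    (M ^ 2).charpoly = (X - C (x ^ 2)) * (X - C (y ^ 2)) := by
  apply charpoly_fin_two_eq_of_trace_of_det
  · rw [trace_sq_fin_two, htr, hdet]; ring
  · rw [det_pow, hdet]; ring

theorem exists_trace_eq_add_det_eq_mul_fin_two (M : Matrix (Fin 2) (Fin 2) ℝ)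
    (h : 0 ≤ M 0 1 * M 1 0) : ∃ x y, M.trace = x + y ∧ M.det = x * y := by
  set s := √((M 0 0 - M 1 1) ^ 2 + 4 * (M 0 1 * M 1 0))
  have hs : s ^ 2 = (M 0 0 - M 1 1) ^ 2 + 4 * (M 0 1 * M 1 0) := Real.sq_sqrt (by positivity)
  refine ⟨(M.trace + s) / 2, (M.trace - s) / 2, by ring, ?_⟩
  rw [trace_fin_two, det_fin_two]
  linear_combination (1 / 4 : ℝ) * hs

end Matrix

theorem Jc_eq_map_Jr : Jc = Jr.map Complex.ofReal := by
  ext i j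
  fin_cases i <;> fin_cases j <;> simp [Jc, Jr]

theorem transpose_Jr : Jrᵀ = Jr := by
  ext i j
  fin_cases i <;> fin_cases j <;> simp [Jr]

theorem spinFlip_map_ofReal (M : Matrix (Fin 4) (Fin 4) ℝ) :
    spinFlip (M.map Complex.ofReal) = (Jr * M * Jr).map Complex.ofReal := by
  have hconj : (M.map Complex.ofReal).map (starRingEnd ℂ) = M.map Complex.ofReal := by
    ext i j; simp
  rw [spinFlip, hconj, Jc_eq_map_Jr]
  change _ = (Jr * M * Jr).map Complex.ofRealHom
  rw [Matrix.map_mul, Matrix.map_mul]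
  rfl

theorem concurrence_eq_sqrt_sub_sqrt {ρ : Matrix (Fin 4) (Fin 4) ℂ} {u v : ℝ} (hu : 0 ≤ u)
    (huv : u ≤ v) (h : (ρ * spinFlip ρ).charpoly.roots.map Complex.re = {0, 0, u, v}) :
    concurrence ρ = √v - √u := by
  have hsort : ((ρ * spinFlip ρ).charpoly.roots.map Complex.re).sort (· ≤ ·) = [0, 0, u, v] := by
    rw [h, Multiset.insert_eq_cons, Multiset.insert_eq_cons, Multiset.insert_eq_cons,
      Multiset.sort_cons, Multiset.sort_cons, Multiset.sort_cons, Multiset.sort_singleton]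
    all_goals simp [hu, huv, hu.trans huv]
  rw [concurrence]
  simp only [hsort, List.getD_cons_succ, List.getD_cons_zero, Real.sqrt_zero, sub_zero]
  exact max_eq_right (sub_nonneg.2 (Real.sqrt_le_sqrt huv))

theorem concurrence_eq_of_charpoly {ρ : Matrix (Fin 4) (Fin 4) ℂ} {x y : ℝ}
    (h : (ρ * spinFlip ρ).charpoly =
      X ^ 2 * ((X - C ((x ^ 2 : ℝ) : ℂ)) * (X - C ((y ^ 2 : ℝ) : ℂ)))) :
    concurrence ρ = |(|x| - |y|)| := by
  wlog hxy : |x| ≤ |y| generalizing x y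
  · rw [abs_sub_comm]
    exact this (by rw [h]; ring) (le_of_not_ge hxy)
  have hroots : (ρ * spinFlip ρ).charpoly.roots.map Complex.re = {0, 0, x ^ 2, y ^ 2} := by
    have : (ρ * spinFlip ρ).charpoly =
        (({0, 0, ((x ^ 2 : ℝ) : ℂ), ((y ^ 2 : ℝ) : ℂ)} : Multiset ℂ).map (X - C ·)).prod := by
      rw [h]
      simp only [Multiset.insert_eq_cons, Multiset.map_cons, Multiset.map_singleton,
        Multiset.prod_cons, Multiset.prod_singleton, map_zero, sub_zero]
      ring
    rw [this, roots_multiset_prod_X_sub_C]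
    simp [-Complex.ofReal_pow]
  rw [concurrence_eq_sqrt_sub_sqrt (sq_nonneg x) (sq_le_sq.2 hxy) hroots,
    Real.sqrt_sq_eq_abs, Real.sqrt_sq_eq_abs, abs_sub_comm, abs_of_nonneg (sub_nonneg.2 hxy)]

def flipGram {n : Type*} (Φ : Matrix n (Fin 4) ℝ) : Matrix n n ℝ := Φ * Jr * Φᵀ

theorem flipGram_apply {n : Type*} (Φ : Matrix n (Fin 4) ℝ) (k l : n) :
    flipGram Φ k l = Φ k ⬝ᵥ Jr *ᵥ Φ l := by
  rw [dotProduct_mulVec]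
  rfl

theorem isSymm_flipGram {n : Type*} (Φ : Matrix n (Fin 4) ℝ) : (flipGram Φ).IsSymm := by
  rw [IsSymm, flipGram, transpose_mul, transpose_mul, transpose_transpose, transpose_Jr,
    Matrix.mul_assoc]

theorem X_pow_mul_charpoly_mul_spinFlip {n : Type*} [Fintype n] [DecidableEq n]
    (Φ : Matrix n (Fin 4) ℝ) (D : Matrix n n ℝ) :
    X ^ Fintype.card n * ((Φᵀ * D * Φ).map Complex.ofReal *
        spinFlip ((Φᵀ * D * Φ).map Complex.ofReal)).charpoly =
      X ^ 4 * ((D * flipGram Φ) ^ 2).charpoly.map Complex.ofRealHom := by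
  have hfactor : Φᵀ * D * Φ * (Jr * (Φᵀ * D * Φ) * Jr) = Φᵀ * (D * flipGram Φ * D * Φ * Jr) := by
    simp only [flipGram, Matrix.mul_assoc]
  have hswap : D * flipGram Φ * D * Φ * Jr * Φᵀ = (D * flipGram Φ) ^ 2 := by
    simp only [flipGram, sq, Matrix.mul_assoc]
  rw [spinFlip_map_ofReal]
  change X ^ _ * ((Φᵀ * D * Φ).map Complex.ofRealHom *
    (Jr * (Φᵀ * D * Φ) * Jr).map Complex.ofRealHom).charpoly = _
  rw [← Matrix.map_mul, charpoly_map, hfactor, ← Polynomial.map_X Complex.ofRealHom,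
    ← Polynomial.map_pow, ← Polynomial.map_mul, charpoly_mul_comm', hswap, Fintype.card_fin,
    Polynomial.map_mul, Polynomial.map_pow, Polynomial.map_X]

theorem smul_pureState_add_smul_pureState (ψ₁ ψ₂ : Fin 4 → ℝ) (p q : ℝ) :
    p • pureState ψ₁ + q • pureState ψ₂ =
      ((of ![ψ₁, ψ₂])ᵀ * diagonal ![p, q] * of ![ψ₁, ψ₂]).map Complex.ofReal := by
  ext i j
  simp only [pureState, Matrix.add_apply, Matrix.smul_apply, map_apply, vecMulVec_apply,
    Complex.real_smul, mul_apply, transpose_apply, of_apply, Fin.sum_univ_two, cons_val_zero,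
    cons_val_one, cons_val_fin_one, diagonal_apply_eq, diagonal_apply_ne, ne_eq, one_ne_zero,
    zero_ne_one, not_false_eq_true, mul_zero, add_zero, zero_add]
  push_cast
  ring

theorem concurrence_smul_pureState_add_smul_pureState {ψ₁ ψ₂ : Fin 4 → ℝ} {p q x y : ℝ}
    (htr : (diagonal ![p, q] * flipGram (of ![ψ₁, ψ₂])).trace = x + y)
    (hdet : (diagonal ![p, q] * flipGram (of ![ψ₁, ψ₂])).det = x * y) :
    concurrence (p • pureState ψ₁ + q • pureState ψ₂) = |(|x| - |y|)| := by
  apply concurrence_eq_of_charpoly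
  have h := X_pow_mul_charpoly_mul_spinFlip (of ![ψ₁, ψ₂]) (diagonal ![p, q])
  rw [charpoly_sq_fin_two htr hdet, Fintype.card_fin, ← smul_pureState_add_smul_pureState] at h
  apply mul_left_cancel₀ (pow_ne_zero 2 X_ne_zero)
  rw [h]
  simp only [Polynomial.map_mul, Polynomial.map_sub, map_X, map_C,
    Complex.ofRealHom_eq_coe]
  ring

theorem concurrence_pureState (ψ : Fin 4 → ℝ) : concurrence (pureState ψ) = |ψ ⬝ᵥ Jr *ᵥ ψ| := by
  have hpure : pureState ψ = (1 : ℝ) • pureState ψ + (0 : ℝ) • pureState ψ := by simp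
  rw [hpure, concurrence_smul_pureState_add_smul_pureState (x := ψ ⬝ᵥ Jr *ᵥ ψ) (y := 0)]
  · simp
  · simp only [trace_fin_two, diagonal_mul, flipGram_apply, cons_val_zero, cons_val_one,
      cons_val_fin_one, one_mul, zero_mul, add_zero]
    rfl
  · simp [det_fin_two]

theorem concurrence_convex_two_general
    (ψ₁ ψ₂ : Fin 4 → ℝ)
    (p : ℝ) (hp : p ∈ Set.Icc (0 : ℝ) 1) :
    concurrence (p • pureState ψ₁ + (1 - p) • pureState ψ₂) ≤
      p * concurrence (pureState ψ₁) + (1 - p) * concurrence (pureState ψ₂) := by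
  obtain ⟨hp0, hp1⟩ := hp
  set M := diagonal ![p, 1 - p] * flipGram (of ![ψ₁, ψ₂])
  have hoff : 0 ≤ M 0 1 * M 1 0 := by
    have h := (isSymm_flipGram (of ![ψ₁, ψ₂])).apply 0 1
    have hsq : M 0 1 * M 1 0 = p * (1 - p) * flipGram (of ![ψ₁, ψ₂]) 0 1 ^ 2 := by
      simp only [M, diagonal_mul, h, cons_val_zero, cons_val_one, cons_val_fin_one]
      ring
    rw [hsq]
    exact mul_nonneg (mul_nonneg hp0 (sub_nonneg.2 hp1)) (sq_nonneg _)
  obtain ⟨x, y, htr, hdet⟩ := M.exists_trace_eq_add_det_eq_mul_fin_two hoff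
  have htrace : M.trace = p * (ψ₁ ⬝ᵥ Jr *ᵥ ψ₁) + (1 - p) * (ψ₂ ⬝ᵥ Jr *ᵥ ψ₂) := by
    simp only [M, trace_fin_two, diagonal_mul, flipGram_apply, cons_val_zero, cons_val_one,
      cons_val_fin_one]
    rfl
  rw [concurrence_smul_pureState_add_smul_pureState htr hdet, concurrence_pureState,
    concurrence_pureState]
  calc |(|x| - |y|)| ≤ |x + y| := by simpa using abs_abs_sub_abs_le_abs_sub x (-y)
    _ = |p * (ψ₁ ⬝ᵥ Jr *ᵥ ψ₁) + (1 - p) * (ψ₂ ⬝ᵥ Jr *ᵥ ψ₂)| := by rw [← htr, htrace]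
    _ ≤ p * |ψ₁ ⬝ᵥ Jr *ᵥ ψ₁| + (1 - p) * |ψ₂ ⬝ᵥ Jr *ᵥ ψ₂| := by
      refine (abs_add_le _ _).trans_eq ?_
      rw [abs_mul, abs_mul, abs_of_nonneg hp0, abs_of_nonneg (sub_nonneg.2 hp1)]

/-- Convexity of concurrence on mixtures of two real pure states. -/
theorem concurrence_convex_two
    (ψ₁ ψ₂ : Fin 4 → ℝ) (hind : LinearIndependent ℝ ![ψ₁, ψ₂])
    (h₁ : ∑ i, ψ₁ i ^ 2 = 1) (h₂ : ∑ i, ψ₂ i ^ 2 = 1)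
    (p : ℝ) (hp : p ∈ Set.Icc (0 : ℝ) 1) :
    concurrence (p • pureState ψ₁ + (1 - p) • pureState ψ₂) ≤
      p * concurrence (pureState ψ₁) + (1 - p) * concurrence (pureState ψ₂) :=
  concurrence_convex_two_general ψ₁ ψ₂ p hp
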